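/- arXiv:1710.07255 — 4 statements merged into one kernel-verified Lean document; each statement's English description precedes it below -/
import Mathlib

section
/- Let k ≥ 3, m ≥ 1, let H be a subgraph of the torus C_k^m that does not wrap, and set r = |V(H)|. If there exists a finite multiset of restricted copies of H in C_k^m that is a (1, 0, ..., 0, -1)-layered cover of C_k^m, then for every j ≥ m there exists a finite multiset of restricted copies of H in C_k^j that is a (1, 1, ..., 1, 1-k)-layered cover of C_k^j (every vertex with first coordinate different from k-1 is covered 1 mod r times, and every vertex with first coordinate k-1 is covered 1-k mod r times). -/
/-- The torus `C_k^n`. -/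
def torus (k n : ℕ) : SimpleGraph (Fin n → ZMod k) :=
  SimpleGraph.fromRel fun u v => ∃ i, u i - v i = 1 ∧ ∀ j, j ≠ i → u j = v j

/-- A set of vertices of `C_k^m` does not wrap: every coordinate of every vertex lies in
`{0, ..., k-2}` (identifying `ZMod k` with `{0, ..., k-1}`). -/
def DoesNotWrap (k m : ℕ) (A : Set (Fin m → ZMod k)) : Prop :=
  ∀ v ∈ A, ∀ i : Fin m, (v i).val ≤ k - 2

/-- The map `C_k^m → C_k^n` appending `n - m` zero coordinates. -/
def extendZeroMap (k m n : ℕ) (v : Fin m → ZMod k) : Fin n → ZMod k :=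
  fun ℓ => if h : (ℓ : ℕ) < m then v ⟨ℓ, h⟩ else 0

/-- The bend map `S^{n,s}_{i,j} : C_k^m → C_k^n` (with `i : Fin m` zero-indexed, so that
`i` here corresponds to coordinate `i+1 ∈ {1,...,m}` of the paper; `j ∈ {0,...,k-2}`;
the paper's coordinate `m+s` is the zero-indexed coordinate `m+s-1`).  A vertex `v` with
`v i < j` is extended by zeros; a vertex with `v i = j - 1 + t`, `t ≥ 1`, has its `i`-th
coordinate replaced by `j - 1` and its appended coordinate `m + s - 1` set to `t`. -/
def bendMap (k m n : ℕ) (i : Fin m) (j s : ℕ) (v : Fin m → ZMod k) : Fin n → ZMod k :=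
  fun ℓ =>
    if h : (ℓ : ℕ) < m then
      if (ℓ : ℕ) = (i : ℕ) then
        (if (v i).val < j then v i else (j : ZMod k) - 1)
      else v ⟨ℓ, h⟩
    else
      if (ℓ : ℕ) = m + s - 1 then
        (if (v i).val < j then 0 else v i - ((j : ZMod k) - 1))
      else 0

/-- `B ⊆ C_k^n` is a restricted copy of the set `A ⊆ C_k^m`: it is obtained from
`A × {0}^{n-m}` by a finite composition of translates and bend maps. -/
inductive IsRestrictedCopy (k : ℕ) {m : ℕ} (A : Set (Fin m → ZMod k)) :
    {n : ℕ} → Set (Fin n → ZMod k) → Prop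
  | extend {n : ℕ} (h : m ≤ n) : IsRestrictedCopy k A (extendZeroMap k m n '' A)
  | translate {n : ℕ} {B : Set (Fin n → ZMod k)} (w : Fin n → ZMod k)
      (hB : IsRestrictedCopy k A B) : IsRestrictedCopy k A ((· + w) '' B)
  | bend {n n' : ℕ} {B : Set (Fin n → ZMod k)} (h : n ≤ n') (i : Fin n) (j s : ℕ)
      (hj : j ≤ k - 2) (hs : 1 ≤ s) (hs' : s ≤ n' - n)
      (hB : IsRestrictedCopy k A B) : IsRestrictedCopy k A (bendMap k n n' i j s '' B)

open scoped Classical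

/-! Extending a cover by zero coordinates and adding up its translates along the new coordinates
gives a cover of `C_k^j` with the same layer pattern `(1, 0, ..., 0, -1)`. Its translate by `c`
along the first coordinate has the pattern shifted to `+1` on layer `c` and `-1` on layer `c - 1`.
Taking that translate `k - 1 - c` times for every `c`, layer `x` is covered
`(k - 1 - x) - (k - 2 - x) = 1` times for `x < k - 1`, and `0 - (k - 1) = 1 - k` times for
`x = k - 1`. -/

lemma extendZeroMap_extendZeroMap (k l m n : ℕ) (hlm : l ≤ m) (v : Fin l → ZMod k) :
    extendZeroMap k m n (extendZeroMap k l m v) = extendZeroMap k l n v := by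
  funext ℓ
  simp only [extendZeroMap]
  split_ifs <;> first | rfl | omega

lemma extendZeroMap_add (k m n : ℕ) (v w : Fin m → ZMod k) :
    extendZeroMap k m n (v + w) = extendZeroMap k m n v + extendZeroMap k m n w := by
  funext ℓ
  simp only [extendZeroMap, Pi.add_apply]
  split_ifs <;> simp

lemma extendZeroMap_bendMap (k l m n : ℕ) (i : Fin l) (j s : ℕ) (hs : 1 ≤ s) (hs' : s ≤ m - l)
    (v : Fin l → ZMod k) :
    extendZeroMap k m n (bendMap k l m i j s v) = bendMap k l n i j s v := by
  funext ℓ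
  simp only [extendZeroMap, bendMap]
  split_ifs <;> first | rfl | omega

lemma IsRestrictedCopy.image_extendZeroMap {k m n : ℕ} {A : Set (Fin m → ZMod k)}
    {B : Set (Fin n → ZMod k)} (hB : IsRestrictedCopy k A B) {n' : ℕ} (hn : n ≤ n') :
    IsRestrictedCopy k A (extendZeroMap k n n' '' B) := by
  induction hB generalizing n' with
  | extend h =>
    rw [← Set.image_comp, Function.comp_def]
    simp only [extendZeroMap_extendZeroMap _ _ _ _ h]
    exact .extend (h.trans hn)
  | translate w _ ih =>
    rw [← Set.image_comp, Function.comp_def]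
    simp only [extendZeroMap_add]
    rw [← Function.comp_def (· + _), Set.image_comp]
    exact .translate _ (ih hn)
  | bend h i j s hj hs hs' hB =>
    rw [← Set.image_comp, Function.comp_def]
    simp only [extendZeroMap_bendMap _ _ _ _ i j s hs hs']
    exact .bend (h.trans hn) i j s hj hs (by omega) hB

section Translates

variable {G ι : Type*} [AddGroup G] [Fintype ι]

lemma countP_mem_map_image_add (Z : Multiset (Set G)) (w v : G) :
    Multiset.countP (fun B => v ∈ B) (Z.map fun B => (· + w) '' B) =
      Multiset.countP (fun B => v - w ∈ B) Z := by
  rw [Multiset.countP_map, Multiset.countP_eq_card_filter]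
  simp only [Set.image_add_right, Set.mem_preimage, sub_eq_add_neg]

lemma countP_mem_sum_nsmul_map_image_add (c : ι → ℕ) (τ : ι → G) (Z : Multiset (Set G)) (v : G) :
    Multiset.countP (fun B => v ∈ B) (∑ i, c i • Z.map fun B => (· + τ i) '' B) =
      ∑ i, c i * Multiset.countP (fun B => v - τ i ∈ B) Z := by
  rw [← Multiset.coe_countPAddMonoidHom, map_sum]
  simp only [Multiset.coe_countPAddMonoidHom, Multiset.countP_nsmul, countP_mem_map_image_add]

end Translates

lemma Multiset.forall_mem_sum_nsmul_map {ι α β : Type*} [Fintype ι] {p : β → Prop}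
    (c : ι → ℕ) (f : ι → α → β) {Z : Multiset α} (h : ∀ i, ∀ B ∈ Z, p (f i B)) :
    ∀ B ∈ ∑ i, c i • Z.map (f i), p B := by
  simp only [Multiset.mem_sum, Finset.mem_univ, true_and]
  rintro _ ⟨i, hi⟩
  obtain ⟨B, hB, rfl⟩ := Multiset.mem_map.1 (Multiset.mem_of_mem_nsmul hi)
  exact h i B hB

lemma extendZeroMap_succ (k n : ℕ) (x : Fin n → ZMod k) :
    extendZeroMap k n (n + 1) x = Fin.snoc x 0 := by
  funext ℓ
  cases ℓ using Fin.lastCases <;> simp [extendZeroMap, Fin.snoc]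

lemma countP_mem_map_image_extendZeroMap_succ {k n : ℕ} (Z : Multiset (Set (Fin n → ZMod k)))
    (v : Fin (n + 1) → ZMod k) :
    Multiset.countP (fun B => v ∈ B) (Z.map fun B => extendZeroMap k n (n + 1) '' B) =
      if v (Fin.last n) = 0 then Multiset.countP (fun B => Fin.init v ∈ B) Z else 0 := by
  have hinj : Function.Injective (extendZeroMap k n (n + 1)) := fun x y hxy => by
    simpa only [extendZeroMap_succ, Fin.init_snoc] using congrArg Fin.init hxy
  split_ifs with hv
  · rw [Multiset.countP_map, Multiset.countP_eq_card_filter]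
    conv_lhs => rw [← Fin.snoc_init_self v, hv, ← extendZeroMap_succ]
    simp only [hinj.mem_set_image]
  · rw [Multiset.countP_eq_zero]
    intro _ hB hvB
    obtain ⟨B, -, rfl⟩ := Multiset.mem_map.1 hB
    obtain ⟨x, -, rfl⟩ := hvB
    simp [extendZeroMap_succ] at hv

/-- The layer pattern `a` is indexed by the value of the first coordinate: `a x` is the paper's
`a_{x+1}`. -/
def IsLayeredCover (k : ℕ) {m n : ℕ} (hn : 0 < n) (A : Set (Fin m → ZMod k)) (a : ZMod k → ℤ)
    (Y : Multiset (Set (Fin n → ZMod k))) : Prop :=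
  (∀ B ∈ Y, IsRestrictedCopy k A B) ∧
    ∀ v : Fin n → ZMod k,
      (Multiset.countP (fun B => v ∈ B) Y : ℤ) ≡ a (v ⟨0, hn⟩) [ZMOD (A.ncard : ℤ)]

namespace IsLayeredCover

variable {k m n : ℕ} [NeZero k] {hn : 0 < n} {A : Set (Fin m → ZMod k)} {a : ZMod k → ℤ}
  {Z : Multiset (Set (Fin n → ZMod k))}

lemma exists_succ (hZ : IsLayeredCover k hn A a Z) :
    ∃ Y, IsLayeredCover k (Nat.lt_succ_of_lt hn) A a Y := by
  refine ⟨∑ t : ZMod k, 1 • (Z.map fun B => extendZeroMap k n (n + 1) '' B).map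
    fun B => (· + Pi.single (Fin.last n) t) '' B, ?_, fun v => ?_⟩
  · refine Multiset.forall_mem_sum_nsmul_map _ _ fun t B hB => ?_
    obtain ⟨B₀, hB₀, rfl⟩ := Multiset.mem_map.1 hB
    exact .translate _ ((hZ.1 B₀ hB₀).image_extendZeroMap n.le_succ)
  · have hinit (t : ZMod k) : Fin.init (v - Pi.single (Fin.last n) t) = Fin.init v := by
      funext i
      simp [Fin.init, (Fin.castSucc_lt_last i).ne]
    simp only [countP_mem_sum_nsmul_map_image_add, one_mul, countP_mem_map_image_extendZeroMap_succ,
      hinit, Pi.sub_apply, Pi.single_eq_same, sub_eq_zero, Finset.sum_ite_eq, Finset.mem_univ,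
      if_true]
    exact hZ.2 (Fin.init v)

lemma exists_of_le (hZ : IsLayeredCover k hn A a Z) {n' : ℕ} (h : n ≤ n') :
    ∃ Y, IsLayeredCover k (hn.trans_le h) A a Y := by
  induction n', h using Nat.le_induction with
  | base => exact ⟨Z, hZ⟩
  | succ n' _ ih =>
    obtain ⟨Y, hY⟩ := ih
    exact hY.exists_succ

lemma sum_nsmul_map_translate (hZ : IsLayeredCover k hn A a Z) (w : ZMod k → ℕ) :
    IsLayeredCover k hn A (fun x => ∑ c, (w c : ℤ) * a (x - c))
      (∑ c, w c • Z.map fun B => (· + Pi.single ⟨0, hn⟩ c) '' B) := by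
  refine ⟨Multiset.forall_mem_sum_nsmul_map _ _ fun c B hB => .translate _ (hZ.1 B hB),
    fun v => ?_⟩
  rw [countP_mem_sum_nsmul_map_image_add]
  push_cast
  exact Int.ModEq.sum fun c _ => (hZ.2 _).mul_left _

end IsLayeredCover

lemma natCast_pred_eq_neg_one (k : ℕ) [NeZero k] : ((k - 1 : ℕ) : ZMod k) = -1 := by
  rw [Nat.cast_sub NeZero.one_le, ZMod.natCast_self, Nat.cast_one, zero_sub]

lemma sum_mul_ite_sub_eq_zero (k : ℕ) [NeZero k] [Fact (1 < k)] (w : ZMod k → ℤ) (x : ZMod k) :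
    ∑ c, w c * (if x - c = 0 then 1 else if x - c = ((k - 1 : ℕ) : ZMod k) then -1 else 0) =
      w x - w (x + 1) := by
  have hx : x ≠ x + 1 := by simp
  have hsummand (c : ZMod k) :
      w c * (if x - c = 0 then 1 else if x - c = ((k - 1 : ℕ) : ZMod k) then -1 else 0) =
        (if x = c then w c else 0) - (if x + 1 = c then w c else 0) := by
    have hneg : x - c = -1 ↔ x + 1 = c := by
      constructor <;> intro h <;> linear_combination h
    simp only [natCast_pred_eq_neg_one, sub_eq_zero, hneg]
    split_ifs with h h' <;> first | exact absurd (h.trans h'.symm) hx | ring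
  simp only [hsummand, Finset.sum_sub_distrib, Finset.sum_ite_eq, Finset.mem_univ, if_true]

lemma pred_sub_val_sub_pred_sub_val_add_one (k : ℕ) [NeZero k] [Fact (1 < k)] (x : ZMod k) :
    ((k - 1 - x.val : ℕ) : ℤ) - ((k - 1 - (x + 1).val : ℕ) : ℤ) =
      if x = ((k - 1 : ℕ) : ZMod k) then 1 - (k : ℤ) else 1 := by
  have hlt := x.val_lt
  have hiff : x = ((k - 1 : ℕ) : ZMod k) ↔ x.val = k - 1 := by
    refine ⟨fun h => ?_, fun h => by rw [← h, ZMod.natCast_zmod_val]⟩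
    rw [h, ZMod.val_cast_of_lt (by omega)]
  rw [ZMod.val_add, ZMod.val_one]
  simp only [hiff]
  split_ifs with h
  · rw [h, Nat.sub_add_cancel NeZero.one_le, Nat.mod_self]
    omega
  · rw [Nat.mod_eq_of_lt (by omega)]
    omega

theorem layered_cover_all_levels_general (k m : ℕ) (hk : 3 ≤ k) (hm : 1 ≤ m)
    (H : (torus k m).Subgraph)
    -- there is a `(1, 0, ..., 0, -1)`-layered cover of `C_k^m`, with `r = |V(H)|`
    (hZ : ∃ Z : Multiset (Set (Fin m → ZMod k)),
      (∀ B ∈ Z, IsRestrictedCopy k H.verts B) ∧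
      ∀ v : Fin m → ZMod k,
        (Multiset.countP (fun B => v ∈ B) Z : ℤ) ≡
          (if v ⟨0, hm⟩ = 0 then 1 else
            if v ⟨0, hm⟩ = ((k - 1 : ℕ) : ZMod k) then -1 else 0)
          [ZMOD (H.verts.ncard : ℤ)]) :
    -- for every `j ≥ m` there is a `(1, 1, ..., 1, 1-k)`-layered cover of `C_k^j`
    ∀ j : ℕ, ∀ hj : m ≤ j, ∃ Y : Multiset (Set (Fin j → ZMod k)),
      (∀ B ∈ Y, IsRestrictedCopy k H.verts B) ∧
      ∀ v : Fin j → ZMod k,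
        (Multiset.countP (fun B => v ∈ B) Y : ℤ) ≡
          (if v ⟨0, Nat.lt_of_lt_of_le hm hj⟩ = ((k - 1 : ℕ) : ZMod k)
            then 1 - (k : ℤ) else 1)
          [ZMOD (H.verts.ncard : ℤ)] := by
  intro j hj
  have : NeZero k := ⟨by omega⟩
  have : Fact (1 < k) := ⟨by omega⟩
  obtain ⟨Z, hZ⟩ := hZ
  obtain ⟨Y, hY⟩ := IsLayeredCover.exists_of_le (a := fun x => if x = 0 then 1 else
    if x = ((k - 1 : ℕ) : ZMod k) then -1 else 0) hZ hj
  have hcover := hY.sum_nsmul_map_translate fun c => k - 1 - c.val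
  simp only [sum_mul_ite_sub_eq_zero, pred_sub_val_sub_pred_sub_val_add_one] at hcover
  exact ⟨_, hcover⟩

theorem layered_cover_all_levels (k m : ℕ) (hk : 3 ≤ k) (hm : 1 ≤ m)
    (H : (torus k m).Subgraph) (hw : DoesNotWrap k m H.verts)
    -- there is a `(1, 0, ..., 0, -1)`-layered cover of `C_k^m`, with `r = |V(H)|`
    (hZ : ∃ Z : Multiset (Set (Fin m → ZMod k)),
      (∀ B ∈ Z, IsRestrictedCopy k H.verts B) ∧
      ∀ v : Fin m → ZMod k,
        (Multiset.countP (fun B => v ∈ B) Z : ℤ) ≡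
          (if v ⟨0, hm⟩ = 0 then 1 else
            if v ⟨0, hm⟩ = ((k - 1 : ℕ) : ZMod k) then -1 else 0)
          [ZMOD (H.verts.ncard : ℤ)]) :
    -- for every `j ≥ m` there is a `(1, 1, ..., 1, 1-k)`-layered cover of `C_k^j`
    ∀ j : ℕ, ∀ hj : m ≤ j, ∃ Y : Multiset (Set (Fin j → ZMod k)),
      (∀ B ∈ Y, IsRestrictedCopy k H.verts B) ∧
      ∀ v : Fin j → ZMod k,
        (Multiset.countP (fun B => v ∈ B) Y : ℤ) ≡
          (if v ⟨0, Nat.lt_of_lt_of_le hm hj⟩ = ((k - 1 : ℕ) : ZMod k)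
            then 1 - (k : ℤ) else 1)
          [ZMOD (H.verts.ncard : ℤ)] :=
  layered_cover_all_levels_general k m hk hm H hZ
end

section
/- Let k ≥ 3, let H be an induced subgraph of the torus C_k^m that does not wrap, let n > m, s ∈ {1,...,n-m}, i ∈ {1,...,m}, and j ∈ {0,...,k-2}. Then the image of V(H) under the bend map S^{n,s}_{i,j} induces in C_k^n a subgraph isomorphic to H; indeed the restriction of S^{n,s}_{i,j} to V(H) is a graph isomorphism from H onto this induced subgraph. -/
namespace SimpleGraph.Subgraph

theorem IsInduced.exists_iso_induce_image {V W : Type*} {G : SimpleGraph V}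
    {G' : SimpleGraph W} {H : G.Subgraph} (hH : H.IsInduced) (f : V → W)
    (hf : Set.InjOn f H.verts)
    (hadj : ∀ a ∈ H.verts, ∀ b ∈ H.verts, G'.Adj (f a) (f b) ↔ G.Adj a b) :
    ∃ e : H.coe ≃g G'.induce (f '' H.verts), ∀ x : H.verts, (e x : W) = f x :=
  ⟨⟨Equiv.Set.imageOfInjOn f H.verts hf, fun {a b} => by
    simp [Equiv.Set.imageOfInjOn, hadj a a.2 b b.2, hH.adj]⟩, fun _ => rfl⟩

end SimpleGraph.Subgraph

theorem torus_adj_iff {k n : ℕ} {u v : Fin n → ZMod k} :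
    (torus k n).Adj u v ↔
      u ≠ v ∧ ((∃ c, u - v = Pi.single c 1) ∨ ∃ c, v - u = Pi.single c 1) := by
  have hrel : ∀ u v : Fin n → ZMod k, ∀ c, (u c - v c = 1 ∧ ∀ d, d ≠ c → u d = v d) ↔
      u - v = Pi.single c 1 := fun u v c => by
    rw [Pi.single, Function.eq_update_iff]
    simp [sub_eq_zero]
  simp only [torus, SimpleGraph.fromRel_adj, hrel]

section ExtendZero

variable {k m n : ℕ}

theorem extendZeroMap_sub (u v : Fin m → ZMod k) :
    extendZeroMap k m n (u - v) = extendZeroMap k m n u - extendZeroMap k m n v := by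
  funext ℓ
  simp only [extendZeroMap, Pi.sub_apply]
  split_ifs <;> simp

theorem extendZeroMap_zero : extendZeroMap k m n 0 = 0 := by
  funext ℓ
  simp [extendZeroMap]

theorem extendZeroMap_single (h : m ≤ n) (c : Fin m) (x : ZMod k) :
    extendZeroMap k m n (Pi.single c x) = Pi.single (Fin.castLE h c) x := by
  funext ℓ
  simp only [extendZeroMap, Pi.single_apply, Fin.ext_iff, Fin.val_castLE]
  split_ifs <;> first | rfl | omega

theorem extendZeroMap_apply_of_le (v : Fin m → ZMod k) {ℓ : Fin n} (h : m ≤ ℓ) :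
    extendZeroMap k m n v ℓ = 0 :=
  dif_neg (not_lt.mpr h)

theorem extendZeroMap_castLE (h : m ≤ n) (v : Fin m → ZMod k) (ℓ : Fin m) :
    extendZeroMap k m n v (Fin.castLE h ℓ) = v ℓ :=
  dif_pos ℓ.isLt

end ExtendZero

section Bend

variable {k m n s : ℕ}

-- The `t` of the paper, and `0` below `j`.
def bendAmount (k j : ℕ) (x : ZMod k) : ZMod k :=
  if x.val < j then 0 else x - ((j : ZMod k) - 1)

theorem bendAmount_add_one_sub (j : ℕ) {x : ZMod k} (hx : x.val + 1 < k) :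
    bendAmount k j (x + 1) - bendAmount k j x = 0 ∨
      bendAmount k j (x + 1) - bendAmount k j x = 1 := by
  have : Fact (1 < k) := ⟨by omega⟩
  have hval : (x + 1).val = x.val + 1 := by
    rw [ZMod.val_add, ZMod.val_one, Nat.mod_eq_of_lt hx]
  unfold bendAmount
  rw [hval]
  by_cases hbelow : x.val + 1 < j
  · left
    rw [if_pos hbelow, if_pos (by omega), sub_zero]
  by_cases hcross : x.val < j
  · have hj : ((j : ℕ) : ZMod k) = x + 1 := by
      rw [show j = x.val + 1 by omega, Nat.cast_add, ZMod.natCast_zmod_val, Nat.cast_one]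
    right
    rw [if_neg hbelow, if_pos hcross, hj]
    ring
  · right
    rw [if_neg hbelow, if_neg hcross]
    ring

def bendIndex (m s : ℕ) (hs : 1 ≤ s) (hsn : m + s ≤ n) : Fin n := ⟨m + s - 1, by omega⟩

theorem le_bendIndex (hs : 1 ≤ s) (hsn : m + s ≤ n) : m ≤ (bendIndex m s hs hsn : ℕ) := by
  simp only [bendIndex]
  omega

theorem bendMap_eq (hs : 1 ≤ s) (hsn : m + s ≤ n) (i : Fin m) (j : ℕ) (v : Fin m → ZMod k) :
    bendMap k m n i j s v =
      extendZeroMap k m n (v - Pi.single i (bendAmount k j (v i))) +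
        Pi.single (bendIndex m s hs hsn) (bendAmount k j (v i)) := by
  funext ⟨ℓ, hℓ⟩
  simp only [bendMap, extendZeroMap, bendAmount, bendIndex, Pi.add_apply, Pi.sub_apply,
    Pi.single_apply, Fin.ext_iff]
  split_ifs <;> subst_vars <;> first | omega | simp

def unbend (h : m ≤ n) (i : Fin m) (p : Fin n) : (Fin n → ZMod k) →+ (Fin m → ZMod k) where
  toFun w := w ∘ Fin.castLE h + Pi.single i (w p)
  map_zero' := by simp
  map_add' u v := by
    funext ℓ
    simp only [Pi.add_apply, Function.comp_apply, Pi.single_add]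
    abel

theorem unbend_apply (h : m ≤ n) (i : Fin m) (p : Fin n) (w : Fin n → ZMod k) :
    unbend h i p w = w ∘ Fin.castLE h + Pi.single i (w p) := rfl

theorem unbend_extendZeroMap (h : m ≤ n) (i : Fin m) {p : Fin n} (hp : m ≤ p)
    (v : Fin m → ZMod k) : unbend h i p (extendZeroMap k m n v) = v := by
  funext ℓ
  simp [unbend_apply, extendZeroMap_castLE, extendZeroMap_apply_of_le v hp]

theorem unbend_single_self (h : m ≤ n) (i : Fin m) {p : Fin n} (hp : m ≤ p) (x : ZMod k) :
    unbend h i p (Pi.single p x) = Pi.single i x := by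
  funext ℓ
  have : Fin.castLE h ℓ ≠ p := Fin.ne_of_val_ne (by rw [Fin.val_castLE]; omega)
  simp [unbend_apply, this]

theorem unbend_single (h : m ≤ n) (i : Fin m) {p : Fin n} (hp : m ≤ p) (c : Fin n)
    (x : ZMod k) :
    (∃ c', unbend h i p (Pi.single c x) = Pi.single c' x) ∨ unbend h i p (Pi.single c x) = 0 := by
  by_cases hc : (c : ℕ) < m
  · refine .inl ⟨⟨c, hc⟩, funext fun ℓ => ?_⟩
    have hcp : c ≠ p := fun e => by subst e; omega
    simp [unbend_apply, Pi.single_apply, hcp, Fin.ext_iff]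
  by_cases hcp : c = p
  · exact .inl ⟨i, hcp ▸ unbend_single_self h i hp x⟩
  · refine .inr (funext fun ℓ => ?_)
    have hℓc : Fin.castLE h ℓ ≠ c := fun e => by subst e; simp at hc
    simp [unbend_apply, hℓc, Ne.symm hcp]

theorem unbend_bendMap (hs : 1 ≤ s) (hsn : m + s ≤ n) (i : Fin m) (j : ℕ)
    (v : Fin m → ZMod k) :
    unbend (by omega) i (bendIndex m s hs hsn) (bendMap k m n i j s v) = v := by
  rw [bendMap_eq hs hsn, map_add, unbend_extendZeroMap _ _ (le_bendIndex hs hsn),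
    unbend_single_self _ _ (le_bendIndex hs hsn), sub_add_cancel]

theorem bendMap_injective (hs : 1 ≤ s) (hsn : m + s ≤ n) (i : Fin m) (j : ℕ) :
    Function.Injective (bendMap k m n i j s) :=
  Function.LeftInverse.injective (unbend_bendMap (k := k) hs hsn i j)

theorem bendMap_sub (hs : 1 ≤ s) (hsn : m + s ≤ n) (i : Fin m) (j : ℕ)
    (u v : Fin m → ZMod k) :
    bendMap k m n i j s u - bendMap k m n i j s v =
      extendZeroMap k m n (u - v - Pi.single i (bendAmount k j (u i) - bendAmount k j (v i))) +
        Pi.single (bendIndex m s hs hsn) (bendAmount k j (u i) - bendAmount k j (v i)) := by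
  simp only [bendMap_eq hs hsn, Pi.single_sub, extendZeroMap_sub]
  abel

theorem exists_bendMap_sub_eq_single (hs : 1 ≤ s) (hsn : m + s ≤ n) (i : Fin m) (j : ℕ)
    {u v : Fin m → ZMod k} (hv : (v i).val + 1 < k) {c : Fin m} (huv : u - v = Pi.single c 1) :
    ∃ c', bendMap k m n i j s u - bendMap k m n i j s v = Pi.single c' 1 := by
  have hui : u i = v i + Pi.single (M := fun _ => ZMod k) c 1 i := by
    rw [← huv, Pi.sub_apply, add_sub_cancel]
  have hstep : bendAmount k j (u i) - bendAmount k j (v i) = 0 ∨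
      c = i ∧ bendAmount k j (u i) - bendAmount k j (v i) = 1 := by
    by_cases hci : c = i
    · subst hci
      rw [hui, Pi.single_eq_same]
      exact (bendAmount_add_one_sub j hv).imp_right (⟨rfl, ·⟩)
    · rw [hui, Pi.single_eq_of_ne (Ne.symm hci), add_zero, sub_self]
      exact .inl rfl
  rw [bendMap_sub hs hsn, huv]
  rcases hstep with h | ⟨rfl, h⟩
  · refine ⟨Fin.castLE (by omega) c, ?_⟩
    simp only [h, Pi.single_zero, sub_zero, add_zero]
    exact extendZeroMap_single _ c 1
  · exact ⟨bendIndex m s hs hsn, by rw [h, sub_self, extendZeroMap_zero, zero_add]⟩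

theorem eq_or_exists_sub_eq_single_of_bendMap_sub (hs : 1 ≤ s) (hsn : m + s ≤ n) (i : Fin m)
    (j : ℕ) {u v : Fin m → ZMod k} {c : Fin n}
    (h : bendMap k m n i j s u - bendMap k m n i j s v = Pi.single c 1) :
    (∃ c', u - v = Pi.single c' 1) ∨ u = v := by
  have huv : u - v = unbend (by omega) i (bendIndex m s hs hsn) (Pi.single c 1) := by
    rw [← h, map_sub, unbend_bendMap, unbend_bendMap]
  rw [← sub_eq_zero (a := u), huv]
  exact unbend_single _ i (le_bendIndex hs hsn) c 1

theorem torus_adj_bendMap_iff (hs : 1 ≤ s) (hsn : m + s ≤ n) (i : Fin m) (j : ℕ)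
    {u v : Fin m → ZMod k} (hu : (u i).val + 1 < k) (hv : (v i).val + 1 < k) :
    (torus k n).Adj (bendMap k m n i j s u) (bendMap k m n i j s v) ↔ (torus k m).Adj u v := by
  simp only [torus_adj_iff, (bendMap_injective hs hsn i j).ne_iff]
  refine and_congr_right fun hne => ⟨?_, ?_⟩
  · rintro (⟨c, h⟩ | ⟨c, h⟩)
    · exact .inl ((eq_or_exists_sub_eq_single_of_bendMap_sub hs hsn i j h).resolve_right hne)
    · exact .inr ((eq_or_exists_sub_eq_single_of_bendMap_sub hs hsn i j h).resolve_right
        (Ne.symm hne))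
  · rintro (⟨c, h⟩ | ⟨c, h⟩)
    · exact .inl (exists_bendMap_sub_eq_single hs hsn i j hv h)
    · exact .inr (exists_bendMap_sub_eq_single hs hsn i j hu h)

end Bend

theorem bend_is_induced_copy_general (k m n : ℕ) (hk : 3 ≤ k)
    (H : (torus k m).Subgraph) (hind : H.IsInduced) (hw : DoesNotWrap k m H.verts)
    (i : Fin m) (j s : ℕ) (hs : 1 ≤ s) (hs' : s ≤ n - m) :
    ∃ e : H.coe ≃g (torus k n).induce (bendMap k m n i j s '' H.verts),
      ∀ x : H.verts, (e x : Fin n → ZMod k) = bendMap k m n i j s (x : Fin m → ZMod k) := by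
  have hsn : m + s ≤ n := by omega
  refine hind.exists_iso_induce_image _ (bendMap_injective hs hsn i j).injOn
    fun a ha b hb => torus_adj_bendMap_iff hs hsn i j ?_ ?_
  · have := hw a ha i; omega
  · have := hw b hb i; omega

theorem bend_is_induced_copy (k m n : ℕ) (hk : 3 ≤ k) (hmn : m < n)
    (H : (torus k m).Subgraph) (hind : H.IsInduced) (hw : DoesNotWrap k m H.verts)
    (i : Fin m) (j s : ℕ) (hj : j ≤ k - 2) (hs : 1 ≤ s) (hs' : s ≤ n - m) :
    ∃ e : H.coe ≃g (torus k n).induce (bendMap k m n i j s '' H.verts),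
      ∀ x : H.verts, (e x : Fin n → ZMod k) = bendMap k m n i j s (x : Fin m → ZMod k) :=
  bend_is_induced_copy_general k m n hk H hind hw i j s hs hs'
end

section
/- Let k ≥ 3 be an odd integer and let n ≥ 1. If C is a subgraph of the torus C_k^n isomorphic to the cycle of length k, then there exist a vertex v of C_k^n and a coordinate i ∈ {1,...,n} such that the vertex set of C equals {v + ℓ·e_i : ℓ = 0, 1, ..., k-1}, where e_i denotes the vector whose i-th coordinate is 1 and whose other coordinates are 0. -/
/-- The cycle of length `k`, on vertex set `ZMod k`: `i`, `j` adjacent iff `i - j = ±1`. -/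
def cycleGraphZMod (k : ℕ) : SimpleGraph (ZMod k) :=
  SimpleGraph.fromRel fun i j => i - j = 1

/-!
Parametrize the cycle as `w : ZMod k → (ZMod k)ⁿ`; each step `w (ℓ + 1) - w ℓ` is `±e_{I ℓ}`, and
the `k` steps sum to zero. As `k` is odd, some direction `j` is used an odd number of times, say
`a` times as `+e_j` and `b` times as `-e_j`. Coordinate `j` of the sum gives `a ≡ b (mod k)`, and
with `a + b ≤ k` odd this forces `{a, b} = {0, k}`: all `k` steps are the same vector `±e_j`, so
the cycle is the line through `w 0` in direction `e_j`.
-/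

open Finset

lemma eq_and_eq_zero_of_natCast_eq_of_odd {k a b : ℕ} (hab : a + b ≤ k) (hodd : Odd (a + b))
    (h : (a : ZMod k) = b) : (a = k ∧ b = 0) ∨ (a = 0 ∧ b = k) := by
  have := Nat.odd_iff.mp hodd
  by_cases hlt : a < k ∧ b < k
  · have := ((ZMod.natCast_eq_natCast_iff a b k).mp h).eq_of_lt_of_lt hlt.1 hlt.2
    omega
  · omega

lemma Finset.sum_eq_card_filter_sub_card_filter {ι R : Type*} [Ring R] [DecidableEq R]
    (s : Finset ι) (σ : ι → R) (hσ : ∀ ℓ ∈ s, σ ℓ = 1 ∨ σ ℓ = -1) :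
    ∑ ℓ ∈ s, σ ℓ = #{ℓ ∈ s | σ ℓ = 1} - #{ℓ ∈ s | σ ℓ ≠ 1} := by
  rw [← sum_filter_add_sum_filter_not s (σ · = 1), sub_eq_add_neg]
  congr 1
  · rw [sum_congr rfl fun ℓ hℓ => (mem_filter.mp hℓ).2, sum_const, nsmul_one]
  · rw [sum_congr rfl fun ℓ hℓ => ?_, sum_const, nsmul_eq_mul, mul_neg_one]
    simp only [mem_filter] at hℓ
    exact (hσ ℓ hℓ.1).resolve_left hℓ.2

lemma Fintype.sum_comp_add_right_sub_eq_zero {G M : Type*} [AddGroup G] [Fintype G]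
    [AddCommGroup M] (w : G → M) (a : G) : ∑ g, (w (g + a) - w g) = 0 := by
  rw [sum_sub_distrib, Fintype.sum_equiv (Equiv.addRight a) (fun g => w (g + a)) w fun _ => rfl,
    sub_self]

theorem exists_forall_eq_of_sum_smul_single_eq_zero {ι κ : Type*} [Fintype ι] [Fintype κ]
    [DecidableEq κ] {k : ℕ} (hcard : Fintype.card ι = k) (hodd : Odd k) (I : ι → κ)
    (σ : ι → ZMod k) (hσ : ∀ ℓ, σ ℓ = 1 ∨ σ ℓ = -1)
    (hsum : ∑ ℓ, σ ℓ • Pi.single (I ℓ) (1 : ZMod k) = 0) :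
    ∃ j ε, (ε = 1 ∨ ε = -1) ∧ ∀ ℓ, I ℓ = j ∧ σ ℓ = ε := by
  obtain ⟨j, -, hj⟩ : ∃ j ∈ univ, Odd #{ℓ | I ℓ = j} := by
    have : Odd (∑ j, #{ℓ | I ℓ = j}) := by
      rwa [← card_eq_sum_card_fiberwise fun ℓ _ => mem_univ (I ℓ), card_univ, hcard]
    simpa [Finset.Nonempty] using card_pos.mp ((odd_sum_iff_odd_card_odd _).mp this).pos
  set F : Finset ι := {ℓ | I ℓ = j}
  have hbal : ((#{ℓ ∈ F | σ ℓ = 1} : ℕ) : ZMod k) = #{ℓ ∈ F | σ ℓ ≠ 1} := by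
    rw [← sub_eq_zero, ← sum_eq_card_filter_sub_card_filter F σ fun ℓ _ => hσ ℓ]
    have := congrFun hsum j
    simp only [Finset.sum_apply, Pi.smul_apply, Pi.single_apply, smul_eq_mul, mul_ite, mul_one,
      mul_zero, Pi.zero_apply] at this
    rwa [← sum_filter, filter_congr fun _ _ => eq_comm] at this
  rw [← card_filter_add_card_filter_not (σ · = 1)] at hj
  have hle : #{ℓ ∈ F | σ ℓ = 1} + #{ℓ ∈ F | σ ℓ ≠ 1} ≤ k := by
    rw [card_filter_add_card_filter_not, ← hcard]; exact card_le_univ F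
  have hforall (p : ι → Prop) [DecidablePred p] (hp : #{ℓ | p ℓ} = k) (ℓ : ι) : p ℓ :=
    card_filter_eq_iff.mp (hp.trans (hcard.symm.trans card_univ.symm)) ℓ (mem_univ ℓ)
  rcases eq_and_eq_zero_of_natCast_eq_of_odd hle hj hbal with ⟨hall, -⟩ | ⟨-, hall⟩
  · rw [filter_filter] at hall
    exact ⟨j, 1, .inl rfl, hforall _ hall⟩
  · rw [filter_filter] at hall
    exact ⟨j, -1, .inr rfl, fun ℓ => (hforall _ hall ℓ).imp_right (hσ ℓ).resolve_left⟩

lemma cycleGraphZMod_adj_add_one {k : ℕ} [Fact (1 < k)] (ℓ : ZMod k) :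
    (cycleGraphZMod k).Adj (ℓ + 1) ℓ := by
  simp [cycleGraphZMod]

lemma sub_eq_single_of_forall_ne_eq {ι R : Type*} [DecidableEq ι] [AddGroup R] {u v : ι → R}
    {i : ι} {r : R} (hi : u i - v i = r) (hne : ∀ j, j ≠ i → u j = v j) :
    u - v = Pi.single i r := by
  ext j
  by_cases hj : j = i
  · subst hj; simpa using hi
  · simp [hj, hne j hj]

lemma torus.exists_sub_eq_smul_single_of_adj {k n : ℕ} {u v : Fin n → ZMod k}
    (h : (torus k n).Adj u v) :
    ∃ i, ∃ σ : ZMod k, (σ = 1 ∨ σ = -1) ∧ u - v = σ • Pi.single i 1 := by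
  obtain ⟨-, ⟨i, hi, hne⟩ | ⟨i, hi, hne⟩⟩ := SimpleGraph.fromRel_adj _ u v |>.mp h
  · exact ⟨i, 1, .inl rfl, by rw [one_smul, sub_eq_single_of_forall_ne_eq hi hne]⟩
  · refine ⟨i, -1, .inr rfl, ?_⟩
    rw [neg_one_smul, ← sub_eq_single_of_forall_ne_eq hi hne, neg_sub]

lemma ZMod.eq_add_smul_of_forall_add_one {k : ℕ} [NeZero k] {M : Type*} [AddCommGroup M]
    [Module (ZMod k) M] {w : ZMod k → M} {y : M} (h : ∀ ℓ, w (ℓ + 1) = w ℓ + y) (ℓ : ZMod k) :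
    w ℓ = w 0 + ℓ • y := by
  obtain ⟨m, rfl⟩ := ZMod.natCast_zmod_surjective ℓ
  induction m with
  | zero => simp
  | succ m ih => rw [Nat.cast_succ, h, ih, add_smul, one_smul, add_assoc]

lemma range_add_smul_smul_of_isUnit {R M : Type*} [Monoid R] [Add M] [MulAction R M] (v x : M)
    {ε : R} (hε : IsUnit ε) :
    Set.range (fun ℓ : R => v + ℓ • ε • x) = Set.range (fun ℓ : R => v + ℓ • x) := by
  simp_rw [← mul_smul]
  exact (IsUnit.isUnit_iff_mulRight_bijective.mp hε).surjective.range_comp (fun ℓ => v + ℓ • x)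

theorem odd_cycle_in_torus_is_line_general (k n : ℕ) (hk : 3 ≤ k) (hodd : Odd k)
    (C : (torus k n).Subgraph) (hiso : Nonempty (cycleGraphZMod k ≃g C.coe)) :
    ∃ (v : Fin n → ZMod k) (i : Fin n),
      C.verts =
        Set.range fun ℓ : ZMod k =>
          v + ℓ • (fun t => if t = i then (1 : ZMod k) else 0) := by
  have : Fact (1 < k) := ⟨by omega⟩
  obtain ⟨f⟩ := hiso
  set w : ZMod k → Fin n → ZMod k := fun ℓ => (f ℓ).1
  have hverts : C.verts = Set.range w :=
    Subtype.range_coe.symm.trans (f.surjective.range_comp Subtype.val).symm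
  have hadj (ℓ : ZMod k) : (torus k n).Adj (w (ℓ + 1)) (w ℓ) :=
    C.adj_sub (f.map_adj_iff.mpr (cycleGraphZMod_adj_add_one ℓ))
  choose I σ hσ hstep using fun ℓ => torus.exists_sub_eq_smul_single_of_adj (hadj ℓ)
  have hsum : ∑ ℓ, σ ℓ • Pi.single (I ℓ) (1 : ZMod k) = 0 := by
    simpa only [hstep] using Fintype.sum_comp_add_right_sub_eq_zero w 1
  obtain ⟨j, ε, hε, hconst⟩ :=
    exists_forall_eq_of_sum_smul_single_eq_zero (ZMod.card k) hodd I σ hσ hsum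
  have hline := ZMod.eq_add_smul_of_forall_add_one (w := w) (y := ε • Pi.single j 1) fun ℓ => by
    rw [← sub_eq_iff_eq_add', hstep, (hconst ℓ).1, (hconst ℓ).2]
  refine ⟨w 0, j, ?_⟩
  have hsingle : (fun t => if t = j then (1 : ZMod k) else 0) = Pi.single j 1 :=
    funext fun t => (Pi.single_apply j 1 t).symm
  rw [hverts, hsingle, ← range_add_smul_smul_of_isUnit _ _ (ε := ε)
    (hε.elim (· ▸ isUnit_one) (· ▸ isUnit_one.neg)), ← funext hline]

theorem odd_cycle_in_torus_is_line (k n : ℕ) (hk : 3 ≤ k) (hodd : Odd k) (hn : 1 ≤ n)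
    (C : (torus k n).Subgraph) (hiso : Nonempty (cycleGraphZMod k ≃g C.coe)) :
    ∃ (v : Fin n → ZMod k) (i : Fin n),
      C.verts =
        Set.range fun ℓ : ZMod k =>
          v + ℓ • (fun t => if t = i then (1 : ZMod k) else 0) :=
  odd_cycle_in_torus_is_line_general k n hk hodd C hiso
end

section
/- Let d ≥ 1 and let H be a subgraph of the hypercube Q_d with at least one edge. Suppose H is stiff and there is an odd integer c > 1 such that for every direction i ∈ D(H), the number of edges of H in direction i equals c. Then for no n ≥ 1 can the edge set of Q_n be partitioned into the edge sets of pairwise edge-disjoint subgraphs of Q_n each isomorphic to H. -/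
/-!
By stiffness, an isomorphism from `H` onto a copy `K` of `H` in `Q_n` carries each direction
class `E_i(H)` into a single direction `f i` of `Q_n`, with `f` injective on `D(H)`; hence
`E_j(K)` is either empty or the image of one `E_i(H)`, and `c ∣ |E_j(K)|`. In a perfect packing
of `Q_n` the sets `E_j(K)` partition `E_j(Q_n)`, so `c` divides `|E_j(Q_n)| = 2^(n-1)`, which is
impossible for odd `c > 1`.
-/

/-- The hypercube `Q_n`: vertices are functions `Fin n → ZMod 2`, adjacent iff they
differ in exactly one coordinate. -/
def cube (n : ℕ) : SimpleGraph (Fin n → ZMod 2) :=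
  SimpleGraph.fromRel fun u v => ∃ i, u i ≠ v i ∧ ∀ j, j ≠ i → u j = v j

/-- `E_i(K)`: the set of edges of the subgraph `K` of `Q_n` whose direction is `i`,
i.e. whose endpoints differ in coordinate `i`. -/
def edgesInDir {n : ℕ} (K : (cube n).Subgraph) (i : Fin n) :
    Set (Sym2 (Fin n → ZMod 2)) :=
  {e | e ∈ K.edgeSet ∧ ∃ u v, e = s(u, v) ∧ u i ≠ v i}

/-- `H` is stiff: for every `n ≥ k` and every isomorphism `φ` from `H` to a subgraph `H'`
of `Q_n`, there is a map `f`, injective on the set `D(H)` of directions used by `H`, such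
that `φ` sends every edge of `H` of direction `i` to an edge of `H'` of direction `f i`
(equivalently, `φ(E_i(H)) = E_{f(i)}(H')` for every `i ∈ D(H)`). -/
def Stiff {k : ℕ} (H : (cube k).Subgraph) : Prop :=
  ∀ n : ℕ, k ≤ n → ∀ H' : (cube n).Subgraph, ∀ φ : H.coe ≃g H'.coe,
    ∃ f : Fin k → Fin n,
      Set.InjOn f {i | (edgesInDir H i).Nonempty} ∧
      ∀ u v : H.verts, H.coe.Adj u v → ∀ i : Fin k,
        (u : Fin k → ZMod 2) i ≠ (v : Fin k → ZMod 2) i →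
        (φ u : Fin n → ZMod 2) (f i) ≠ (φ v : Fin n → ZMod 2) (f i)

/-- The edge set of `G` can be partitioned into the edge sets of pairwise edge-disjoint
subgraphs of `G`, each isomorphic to `H` (copies need not be induced). -/
def HasPerfectEdgePacking {V W : Type*} (G : SimpleGraph V) (H : SimpleGraph W) : Prop :=
  ∃ P : Set G.Subgraph,
    (∀ K ∈ P, Nonempty (H ≃g K.coe)) ∧
    P.PairwiseDisjoint (fun K => K.edgeSet) ∧
    ⋃ K ∈ P, K.edgeSet = G.edgeSet


open SimpleGraph

theorem Set.PairwiseDisjoint.image_id {ι α : Type*} [PartialOrder α] [OrderBot α] {s : Set ι}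
    {g : ι → α} (hs : s.PairwiseDisjoint g) : (g '' s).PairwiseDisjoint id := by
  rintro _ ⟨i, hi, rfl⟩ _ ⟨j, hj, rfl⟩ hne
  exact hs hi hj fun hij => hne (hij ▸ rfl)

theorem Set.dvd_ncard_biUnion {ι α : Type*} [Finite α] {s : Set ι} {g : ι → Set α}
    (hs : s.PairwiseDisjoint g) {c : ℕ} (hc : ∀ i ∈ s, c ∣ (g i).ncard) :
    c ∣ (⋃ i ∈ s, g i).ncard := by
  have hunion : ⋃ i ∈ s, g i = ⋃ t ∈ g '' s, id t := by rw [Set.biUnion_image]; rfl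
  rw [hunion, (Set.toFinite _).ncard_biUnion (fun _ _ => Set.toFinite _) hs.image_id]
  exact finsum_mem_induction _ (dvd_zero c) (fun _ _ => dvd_add)
    (by rintro _ ⟨i, hi, rfl⟩; exact hc i hi)

theorem add_single_add_single {ι : Type*} [DecidableEq ι] (u : ι → ZMod 2) (i : ι) :
    u + Pi.single i 1 + Pi.single i 1 = u := by
  have hZ2 : ∀ a : ZMod 2, a + a = 0 := by decide
  rw [add_assoc, ← Pi.single_add, hZ2, Pi.single_zero, add_zero]

namespace SimpleGraph.Subgraph

variable {V W : Type*} {G : SimpleGraph V} {G' : SimpleGraph W} {A : G.Subgraph}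
  {B : G'.Subgraph}

theorem image_edgeSet_of_iso (φ : A.coe ≃g B.coe) {Ψ : V → W}
    (hΨ : ∀ u : A.verts, Ψ u = φ u) : Sym2.map Ψ '' A.edgeSet = B.edgeSet := by
  ext e
  constructor
  · rintro ⟨e, he, rfl⟩
    induction e using Sym2.ind with
    | _ a b =>
      let a' : A.verts := ⟨a, A.edge_vert he⟩
      let b' : A.verts := ⟨b, A.edge_vert he.symm⟩
      rw [Sym2.map_mk, hΨ a', hΨ b']
      exact φ.map_adj_iff.mpr (show A.coe.Adj a' b' from he)
  · induction e using Sym2.ind with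
    | _ x y =>
      intro he
      let x' : B.verts := ⟨x, B.edge_vert he⟩
      let y' : B.verts := ⟨y, B.edge_vert he.symm⟩
      refine ⟨s(φ.symm x', φ.symm y'),
        φ.symm.map_adj_iff.mpr (show B.coe.Adj x' y' from he), ?_⟩
      rw [Sym2.map_mk, hΨ, hΨ, φ.apply_symm_apply, φ.apply_symm_apply]

theorem injOn_edgeSet_of_iso (φ : A.coe ≃g B.coe) {Ψ : V → W}
    (hΨ : ∀ u : A.verts, Ψ u = φ u) : Set.InjOn (Sym2.map Ψ) A.edgeSet := by
  have hinj : Function.Injective (Sym2.map Ψ ∘ Sym2.map ((↑) : A.verts → V)) := by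
    rw [← Sym2.map_comp, show Ψ ∘ (↑) = (↑) ∘ φ from funext hΨ]
    exact Sym2.map.injective (Subtype.val_injective.comp φ.injective)
  rw [← image_coe_edgeSet_coe]
  rintro _ ⟨e, -, rfl⟩ _ ⟨e', -, rfl⟩ h
  exact congrArg _ (hinj h)

end SimpleGraph.Subgraph

section cube

variable {n : ℕ}

theorem cube_adj {u v : Fin n → ZMod 2} :
    (cube n).Adj u v ↔ ∃ i, u i ≠ v i ∧ ∀ j ≠ i, u j = v j := by
  rw [cube, fromRel_adj]
  constructor
  · rintro ⟨-, h | ⟨i, hi, hj⟩⟩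
    · exact h
    · exact ⟨i, hi.symm, fun j hji => (hj j hji).symm⟩
  · rintro ⟨i, hi, hj⟩
    exact ⟨fun h => hi (congrFun h i), Or.inl ⟨i, hi, hj⟩⟩

theorem eq_of_cube_adj_of_ne {u v : Fin n → ZMod 2} (h : (cube n).Adj u v) {i j : Fin n}
    (hi : u i ≠ v i) (hj : u j ≠ v j) : i = j := by
  obtain ⟨k, -, hk⟩ := cube_adj.mp h
  exact (not_not.mp (mt (hk i) hi)).trans (not_not.mp (mt (hk j) hj)).symm

theorem cube_adj_and_ne_iff {u v : Fin n → ZMod 2} {i : Fin n} :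
    (cube n).Adj u v ∧ u i ≠ v i ↔ v = u + Pi.single i 1 := by
  constructor
  · rintro ⟨h, hi⟩
    obtain ⟨k, hk, hj⟩ := cube_adj.mp h
    obtain rfl := eq_of_cube_adj_of_ne h hi hk
    funext j
    by_cases hji : j = i
    · have hZ2 : ∀ a b : ZMod 2, a ≠ b → b = a + 1 := by decide
      subst hji
      simpa using hZ2 _ _ hi
    · simp [hji, hj j hji]
  · rintro rfl
    refine ⟨cube_adj.mpr ⟨i, by simp, fun j hj => by simp [hj]⟩, by simp⟩

theorem mem_edgesInDir {K : (cube n).Subgraph} {i : Fin n} {a b : Fin n → ZMod 2} :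
    s(a, b) ∈ edgesInDir K i ↔ K.Adj a b ∧ a i ≠ b i := by
  refine and_congr_right fun _ => ⟨?_, fun h => ⟨a, b, rfl, h⟩⟩
  rintro ⟨u, v, huv, hne⟩
  rcases Sym2.eq_iff.mp huv with ⟨rfl, rfl⟩ | ⟨rfl, rfl⟩
  exacts [hne, hne.symm]

theorem exists_mem_edgesInDir {K : (cube n).Subgraph} {e : Sym2 (Fin n → ZMod 2)}
    (he : e ∈ K.edgeSet) : ∃ i, e ∈ edgesInDir K i := by
  induction e using Sym2.ind with
  | _ a b =>
    obtain ⟨i, hi, -⟩ := cube_adj.mp (K.adj_sub he)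
    exact ⟨i, mem_edgesInDir.mpr ⟨he, hi⟩⟩

theorem eq_of_mem_edgesInDir {K : (cube n).Subgraph} {e : Sym2 (Fin n → ZMod 2)} {i j : Fin n}
    (hi : e ∈ edgesInDir K i) (hj : e ∈ edgesInDir K j) : i = j := by
  induction e using Sym2.ind with
  | _ a b =>
    rw [mem_edgesInDir] at hi hj
    exact eq_of_cube_adj_of_ne (K.adj_sub hi.1) hi.2 hj.2

theorem edgesInDir_eq_inter (K : (cube n).Subgraph) (i : Fin n) :
    edgesInDir K i = K.edgeSet ∩ edgesInDir ⊤ i := by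
  ext e
  induction e using Sym2.ind with
  | _ a b =>
    simp only [Set.mem_inter_iff, mem_edgesInDir, Subgraph.mem_edgeSet, Subgraph.top_adj]
    exact ⟨fun h => ⟨h.1, K.adj_sub h.1, h.2⟩, fun h => ⟨h.1, h.2.2⟩⟩

theorem two_mul_ncard_edgesInDir_top (i : Fin n) :
    2 * (edgesInDir (⊤ : (cube n).Subgraph) i).ncard = 2 ^ n := by
  classical
  set g : (Fin n → ZMod 2) → Sym2 (Fin n → ZMod 2) := fun u => s(u, u + Pi.single i 1)
  have hfiber (u v : Fin n → ZMod 2) : g v = g u ↔ v = u ∨ v = u + Pi.single i 1 := by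
    simp only [g, Sym2.eq_iff]
    constructor
    · rintro (⟨h, -⟩ | ⟨h, -⟩) <;> simp [h]
    · rintro (rfl | rfl)
      · simp
      · simp [add_single_add_single]
  have hrange : edgesInDir ⊤ i = ↑(Finset.univ.image g) := by
    ext e
    induction e using Sym2.ind with
    | _ a b =>
      rw [mem_edgesInDir, Subgraph.top_adj, cube_adj_and_ne_iff, Finset.coe_image,
        Finset.coe_univ, Set.image_univ]
      constructor
      · rintro rfl
        exact ⟨a, rfl⟩
      · rintro ⟨u, hu⟩
        rcases Sym2.eq_iff.mp hu with ⟨rfl, rfl⟩ | ⟨rfl, rfl⟩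
        exacts [rfl, (add_single_add_single u i).symm]
  have hcard : Fintype.card (Fin n → ZMod 2) = (Finset.univ.image g).card * 2 := by
    rw [← Finset.card_univ, Finset.card_eq_sum_card_image g, ← smul_eq_mul,
      ← Finset.sum_const]
    refine Finset.sum_congr rfl ?_
    rintro _ hb
    obtain ⟨u, -, rfl⟩ := Finset.mem_image.mp hb
    rw [show Finset.univ.filter (fun a => g a = g u) = {u, u + Pi.single i 1} by
      ext v; simp [hfiber]]
    exact Finset.card_pair (by simp)
  rw [hrange, Set.ncard_coe_finset, mul_comm, ← hcard]
  simp

end cube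

section directions

variable {k n : ℕ} {A : (cube k).Subgraph} {B : (cube n).Subgraph}

def MapsDirections (φ : A.coe ≃g B.coe) (f : Fin k → Fin n) : Prop :=
  ∀ u v : A.verts, A.coe.Adj u v → ∀ i : Fin k,
    (u : Fin k → ZMod 2) i ≠ (v : Fin k → ZMod 2) i →
    (φ u : Fin n → ZMod 2) (f i) ≠ (φ v : Fin n → ZMod 2) (f i)

variable {φ : A.coe ≃g B.coe} {f : Fin k → Fin n}
  {Ψ : (Fin k → ZMod 2) → Fin n → ZMod 2}

theorem MapsDirections.image_edgesInDir_subset (hφ : MapsDirections φ f)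
    (hΨ : ∀ u : A.verts, Ψ u = φ u) (i : Fin k) :
    Sym2.map Ψ '' edgesInDir A i ⊆ edgesInDir B (f i) := by
  rintro _ ⟨e, he, rfl⟩
  induction e using Sym2.ind with
  | _ a b =>
    rw [mem_edgesInDir] at he
    let a' : A.verts := ⟨a, A.edge_vert he.1⟩
    let b' : A.verts := ⟨b, A.edge_vert he.1.symm⟩
    rw [Sym2.map_mk, hΨ a', hΨ b', mem_edgesInDir]
    exact ⟨φ.map_adj_iff.mpr (show A.coe.Adj a' b' from he.1), hφ a' b' he.1 i he.2⟩

theorem MapsDirections.edgesInDir_subset_iUnion (hφ : MapsDirections φ f)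
    (hΨ : ∀ u : A.verts, Ψ u = φ u) (j : Fin n) :
    edgesInDir B j ⊆ ⋃ (i) (_ : f i = j), Sym2.map Ψ '' edgesInDir A i := by
  intro e he
  obtain ⟨e, he', rfl⟩ : e ∈ Sym2.map Ψ '' A.edgeSet :=
    (Subgraph.image_edgeSet_of_iso φ hΨ).symm ▸ he.1
  obtain ⟨i, hi⟩ := exists_mem_edgesInDir he'
  have hfi : f i = j := eq_of_mem_edgesInDir (hφ.image_edgesInDir_subset hΨ i ⟨e, hi, rfl⟩) he
  exact Set.mem_iUnion₂.mpr ⟨i, hfi, e, hi, rfl⟩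

theorem MapsDirections.ncard_edgesInDir (hφ : MapsDirections φ f)
    (hΨ : ∀ u : A.verts, Ψ u = φ u)
    (hf : Set.InjOn f {i | (edgesInDir A i).Nonempty}) {i : Fin k}
    (hi : (edgesInDir A i).Nonempty) :
    (edgesInDir B (f i)).ncard = (edgesInDir A i).ncard := by
  rw [← ((Subgraph.injOn_edgeSet_of_iso φ hΨ).mono fun e he => he.1).ncard_image]
  refine congrArg _ (Set.Subset.antisymm (fun e he => ?_) (hφ.image_edgesInDir_subset hΨ i))
  obtain ⟨i', hfi', he'⟩ := Set.mem_iUnion₂.mp (hφ.edgesInDir_subset_iUnion hΨ _ he)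
  obtain rfl : i' = i := hf (Set.image_nonempty.mp ⟨e, he'⟩) hi hfi'
  exact he'

theorem MapsDirections.dvd_ncard_edgesInDir (hφ : MapsDirections φ f)
    (hΨ : ∀ u : A.verts, Ψ u = φ u)
    (hf : Set.InjOn f {i | (edgesInDir A i).Nonempty}) {c : ℕ}
    (hc : ∀ i, (edgesInDir A i).Nonempty → c ∣ (edgesInDir A i).ncard) (j : Fin n) :
    c ∣ (edgesInDir B j).ncard := by
  rcases (edgesInDir B j).eq_empty_or_nonempty with h | ⟨e, he⟩
  · simp [h]
  obtain ⟨i, rfl, e, he', -⟩ := Set.mem_iUnion₂.mp (hφ.edgesInDir_subset_iUnion hΨ j he)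
  rw [hφ.ncard_edgesInDir hΨ hf ⟨e, he'⟩]
  exact hc i ⟨e, he'⟩

end directions

section embedding

variable {n m : ℕ}

noncomputable def cubeCopy (h : n ≤ m) : Copy (cube n) (cube m) where
  toHom :=
    { toFun := fun u => Function.extend (Fin.castLE h) u 0
      map_rel' := by
        intro u v huv
        have hcast := (Fin.castLE_injective h).extend_apply (e' := (0 : Fin m → ZMod 2))
        obtain ⟨i, hi, hj⟩ := cube_adj.mp huv
        refine cube_adj.mpr ⟨Fin.castLE h i, by simpa [hcast] using hi, fun k hk => ?_⟩
        by_cases hk' : ∃ a, Fin.castLE h a = k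
        · obtain ⟨a, rfl⟩ := hk'
          simpa [hcast] using hj a fun hai => hk (hai ▸ rfl)
        · simp [Function.extend_apply' _ _ _ hk'] }
  injective' u v huv := funext fun i => by
    simpa [(Fin.castLE_injective h).extend_apply] using congrFun huv (Fin.castLE h i)

theorem cubeCopy_apply_castLE (h : n ≤ m) (u : Fin n → ZMod 2) (i : Fin n) :
    cubeCopy h u (Fin.castLE h i) = u i :=
  (Fin.castLE_injective h).extend_apply u 0 i

theorem mapsDirections_isoSubgraphMap (h : n ≤ m) (K : (cube n).Subgraph) :
    MapsDirections ((cubeCopy h).isoSubgraphMap K) (Fin.castLE h) := by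
  intro u v _ i hi
  show cubeCopy h u (Fin.castLE h i) ≠ cubeCopy h v (Fin.castLE h i)
  rwa [cubeCopy_apply_castLE, cubeCopy_apply_castLE]

end embedding

theorem Stiff.dvd_ncard_edgesInDir {d : ℕ} {H : (cube d).Subgraph} (hH : Stiff H) {c : ℕ}
    (hc : ∀ i, (edgesInDir H i).Nonempty → c ∣ (edgesInDir H i).ncard) {n : ℕ}
    {K : (cube n).Subgraph} (φ : H.coe ≃g K.coe) (j : Fin n) :
    c ∣ (edgesInDir K j).ncard := by
  -- `Stiff` only speaks about cubes of dimension at least `d`, so `K` is first moved into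
  -- `Q_(max n d)`, where `Fin.castLE` relabels its directions without changing their sizes.
  have hn : n ≤ max n d := le_max_left n d
  let ι := (cubeCopy hn).isoSubgraphMap K
  obtain ⟨f, hf, hφf⟩ := hH (max n d) (le_max_right n d) _ (φ.trans ι)
  obtain ⟨Ψ, hΨ⟩ : ∃ Ψ : (Fin d → ZMod 2) → Fin (max n d) → ZMod 2,
      ∀ u : H.verts, Ψ u = φ.trans ι u :=
    ⟨Function.extend Subtype.val (fun u => φ.trans ι u) 0,
      Subtype.val_injective.extend_apply _ _⟩
  rcases (edgesInDir K j).eq_empty_or_nonempty with h | hj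
  · simp [h]
  rw [← (mapsDirections_isoSubgraphMap hn K).ncard_edgesInDir (Ψ := cubeCopy hn) (fun _ => rfl)
    (Fin.castLE_injective hn).injOn hj]
  exact MapsDirections.dvd_ncard_edgesInDir hφf hΨ hf hc _

theorem stiff_odd_directions_unpackable_general (d : ℕ)
    (H : (cube d).Subgraph) (hstiff : Stiff H)
    (c : ℕ) (hodd : Odd c) (hc : 1 < c)
    (hdir : ∀ i : Fin d, (edgesInDir H i).Nonempty → (edgesInDir H i).ncard = c) :
    ∀ n : ℕ, 1 ≤ n → ¬ HasPerfectEdgePacking (cube n) H.coe := by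
  rintro n hn ⟨P, hiso, hdisj, hcover⟩
  let j : Fin n := ⟨0, hn⟩
  have hunion : ⋃ K ∈ P, edgesInDir K j = edgesInDir ⊤ j := by
    rw [Set.iUnion₂_congr fun K _ => edgesInDir_eq_inter K j, ← Set.iUnion₂_inter, hcover,
      ← Subgraph.edgeSet_top, ← edgesInDir_eq_inter]
  have hdvd : c ∣ (edgesInDir (⊤ : (cube n).Subgraph) j).ncard := by
    rw [← hunion]
    refine Set.dvd_ncard_biUnion (hdisj.mono fun K _ he => he.1) fun K hK => ?_
    exact hstiff.dvd_ncard_edgesInDir (fun i hi => (hdir i hi).symm ▸ dvd_rfl) (hiso K hK).some j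
  have hpow : c ∣ 2 ^ n := two_mul_ncard_edgesInDir_top j ▸ hdvd.mul_left 2
  exact hc.ne' (Nat.Coprime.eq_one_of_dvd (hodd.coprime_two_right.pow_right n) hpow)

theorem stiff_odd_directions_unpackable (d : ℕ) (hd : 1 ≤ d)
    (H : (cube d).Subgraph) (hne : H.edgeSet.Nonempty) (hstiff : Stiff H)
    (c : ℕ) (hodd : Odd c) (hc : 1 < c)
    (hdir : ∀ i : Fin d, (edgesInDir H i).Nonempty → (edgesInDir H i).ncard = c) :
    ∀ n : ℕ, 1 ≤ n → ¬ HasPerfectEdgePacking (cube n) H.coe :=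
  stiff_odd_directions_unpackable_general d H hstiff c hodd hc hdir
end
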